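/- arXiv:0908.0114 — 2 statements merged into one kernel-verified Lean document; each statement's English description precedes it below -/
import Mathlib

section
/- Let n ≥ 4 and let V be a 2n×2n real symmetric matrix, viewed as an n×n block matrix with 2×2 blocks V_{i,j}. If for every subset A ⊆ {1,…,n} with |A| = ⌊n/2⌋ the submatrix V_A (formed from blocks with both indices in A) equals (N+1/2)·I_{2|A|}, then V = (N+1/2)·I_{2n}. -/
/-- If every balanced principal block submatrix of a `2n × 2n` symmetric matrix
(viewed as `n × n` blocks of `2 × 2` matrices) equals `(N+1/2) • 1`, and `n ≥ 4`,
then `V = (N+1/2) • 1`. -/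
theorem blocks_force_scalar (n : ℕ) (hn : 4 ≤ n) (N : ℝ) (hN : 0 ≤ N)
    (V : Matrix (Fin n × Fin 2) (Fin n × Fin 2) ℝ) (hsymm : V.IsSymm)
    (hblocks : ∀ A : Finset (Fin n), A.card = n / 2 →
      ∀ i ∈ A, ∀ j ∈ A, ∀ a b : Fin 2,
        V (i, a) (j, b) = if (i, a) = (j, b) then N + 1/2 else 0) :
    V = (N + 1/2) • (1 : Matrix (Fin n × Fin 2) (Fin n × Fin 2) ℝ) := by
  ext ⟨i, a⟩ ⟨j, b⟩
  have hle : ({i, j} : Finset (Fin n)).card ≤ n / 2 := by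
    have : ({i, j} : Finset (Fin n)).card ≤ 2 := Finset.card_insert_le _ _ |>.trans (by simp)
    omega
  obtain ⟨A, hsub, hcard⟩ := Finset.exists_superset_card_eq hle (by
    simpa [Finset.card_univ] using Nat.div_le_self n 2)
  have hi : i ∈ A := hsub (by simp)
  have hj : j ∈ A := hsub (by simp)
  have := hblocks A hcard i hi j hj a b
  simp only [Matrix.smul_apply, Matrix.one_apply, smul_eq_mul, mul_ite, mul_one, mul_zero]
  exact this
end

section
/- The average normalized purity χ = (N+1/2)^{n_A} · 𝔼_A[det(V_A)^{−1/2}], averaged over all ⌊n/2⌋-element subsets A, satisfies χ ≥ 1 for every symmetric positive definite 2n×2n matrix V whose diagonal 2×2 blocks each have trace at most 2(N+1/2). -/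
open Matrix Finset

/-!
Each term of the average is bounded separately. By AM-GM on the eigenvalues, a positive definite
`V_A` of size `2|A|` has `det V_A ≤ (tr V_A / 2|A|)^{2|A|}`, and the energy constraint gives
`tr V_A ≤ 2|A| (N + 1/2)`. Hence `det(V_A)^{-1/2} ≥ (N + 1/2)^{-|A|}` for every `A`, and so
also on average.
-/

/-- Determinant of the principal block submatrix of `V` on the modes in `A`. -/
noncomputable def subdet (n : ℕ) (V : Matrix (Fin n × Fin 2) (Fin n × Fin 2) ℝ)
    (A : Finset (Fin n)) : ℝ :=
  (V.submatrix (fun p : { i : Fin n // i ∈ A } × Fin 2 => (p.1.1, p.2))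
    (fun p : { i : Fin n // i ∈ A } × Fin 2 => (p.1.1, p.2))).det

theorem Real.prod_le_sum_div_card_pow {ι : Type*} (s : Finset ι) (z : ι → ℝ)
    (hz : ∀ i ∈ s, 0 ≤ z i) : ∏ i ∈ s, z i ≤ ((∑ i ∈ s, z i) / #s) ^ #s := by
  rcases s.eq_empty_or_nonempty with rfl | hs
  · simp
  have hcard : (#s : ℝ) ≠ 0 := by positivity
  have hprod : 0 ≤ ∏ i ∈ s, z i := prod_nonneg hz
  have amgm : (∏ i ∈ s, z i) ^ (#s : ℝ)⁻¹ ≤ (∑ i ∈ s, z i) / #s := by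
    rw [← Real.finsetProd_rpow s z hz, div_eq_inv_mul, mul_sum]
    refine Real.geom_mean_le_arith_mean_weighted s _ z (fun _ _ => by positivity) ?_ hz
    rw [sum_const, nsmul_eq_mul, mul_inv_cancel₀ hcard]
  calc ∏ i ∈ s, z i = ((∏ i ∈ s, z i) ^ (#s : ℝ)⁻¹) ^ #s :=
        (Real.rpow_inv_natCast_pow hprod hs.card_ne_zero).symm
    _ ≤ _ := by gcongr

namespace Matrix.PosSemidef

variable {m : Type*} [Fintype m] [DecidableEq m] {M : Matrix m m ℝ}

theorem det_le_trace_div_card_pow (hM : M.PosSemidef) :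
    M.det ≤ (M.trace / Fintype.card m) ^ Fintype.card m := by
  rw [hM.isHermitian.det_eq_prod_eigenvalues, hM.isHermitian.trace_eq_sum_eigenvalues]
  simpa using Real.prod_le_sum_div_card_pow univ _ fun i _ => hM.eigenvalues_nonneg i

theorem det_le_pow_of_trace_le (hM : M.PosSemidef) {c : ℝ} (hc : 0 ≤ c)
    (htrace : M.trace ≤ Fintype.card m * c) : M.det ≤ c ^ Fintype.card m := by
  refine hM.det_le_trace_div_card_pow.trans (pow_le_pow_left₀ ?_ ?_ _)
  · exact div_nonneg hM.trace_nonneg (Nat.cast_nonneg _)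
  · exact div_le_of_le_mul₀ (Nat.cast_nonneg _) hc (by rwa [mul_comm])

theorem det_le_of_block_trace_le {ι : Type*} [Fintype ι] [DecidableEq ι]
    {V : Matrix (ι × Fin 2) (ι × Fin 2) ℝ} (hV : V.PosSemidef) {c : ℝ} (hc : 0 ≤ c)
    (hblock : ∀ k, V (k, 0) (k, 0) + V (k, 1) (k, 1) ≤ 2 * c) :
    V.det ≤ (c ^ Fintype.card ι) ^ 2 := by
  have htrace : V.trace ≤ Fintype.card (ι × Fin 2) * c :=
    calc V.trace = ∑ k, (V (k, 0) (k, 0) + V (k, 1) (k, 1)) := by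
          simp [trace, Fintype.sum_prod_type, Fin.sum_univ_two]
      _ ≤ ∑ _k : ι, 2 * c := sum_le_sum fun k _ => hblock k
      _ = _ := by
          simp only [sum_const, card_univ, nsmul_eq_mul, Fintype.card_prod, Fintype.card_fin,
            Nat.cast_mul, Nat.cast_ofNat]
          ring
  simpa [← pow_mul, mul_comm] using hV.det_le_pow_of_trace_le hc htrace

end Matrix.PosSemidef

theorem inv_le_inv_sqrt_subdet {n : ℕ} {V : Matrix (Fin n × Fin 2) (Fin n × Fin 2) ℝ}
    (hV : V.PosDef) {c : ℝ} (hc : 0 ≤ c)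
    (hblock : ∀ k, V (k, 0) (k, 0) + V (k, 1) (k, 1) ≤ 2 * c) (A : Finset (Fin n)) :
    (c ^ #A)⁻¹ ≤ (Real.sqrt (subdet n V A))⁻¹ := by
  have hsub : (V.submatrix (fun p : { i // i ∈ A } × Fin 2 => (p.1.1, p.2))
      (fun p => (p.1.1, p.2))).PosDef :=
    hV.submatrix (Subtype.val_injective.prodMap Function.injective_id)
  have hle := hsub.posSemidef.det_le_of_block_trace_le hc fun k => hblock k
  rw [Fintype.card_coe] at hle
  exact inv_anti₀ (Real.sqrt_pos.mpr hsub.det_pos) ((Real.sqrt_le_left (by positivity)).mpr hle)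

theorem chi_ge_one_general (n : ℕ) (N : ℝ) (hN : 0 ≤ N)
    (V : Matrix (Fin n × Fin 2) (Fin n × Fin 2) ℝ) (hpd : V.PosDef)
    (henergy : ∀ k : Fin n, V (k, 0) (k, 0) + V (k, 1) (k, 1) ≤ 2*(N + 1/2)) :
    1 ≤ (N + 1/2)^(n/2) *
      (((Finset.univ.powersetCard (n/2) : Finset (Finset (Fin n))).card : ℝ)⁻¹ *
        ∑ A ∈ Finset.univ.powersetCard (n/2), (Real.sqrt (subdet n V A))⁻¹) := by
  set S : Finset (Finset (Fin n)) := univ.powersetCard (n / 2)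
  have hc : 0 < N + 1/2 := by linarith
  have hS : (0 : ℝ) < #S := by
    simpa [S, card_powersetCard] using Nat.choose_pos (Nat.div_le_self n 2)
  have hterm : ∀ A ∈ S, ((N + 1/2) ^ (n / 2))⁻¹ ≤ (Real.sqrt (subdet n V A))⁻¹ := by
    intro A hA
    simpa [(mem_powersetCard.mp hA).2] using inv_le_inv_sqrt_subdet hpd hc.le henergy A
  have hsum := card_nsmul_le_sum S _ _ hterm
  rw [nsmul_eq_mul] at hsum
  calc (1 : ℝ) = (N + 1/2) ^ (n / 2) * ((#S : ℝ)⁻¹ * (#S * ((N + 1/2) ^ (n / 2))⁻¹)) := by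
        field_simp
    _ ≤ _ := by gcongr

/-- The average normalized purity
`χ = (N+1/2)^{⌊n/2⌋} · 𝔼_A[det(V_A)^{-1/2}]` over all balanced bipartitions
satisfies `χ ≥ 1` for every positive definite covariance matrix whose diagonal
`2×2` blocks each have trace at most `2(N+1/2)`. -/
theorem chi_ge_one (n : ℕ) (hn : 2 ≤ n) (N : ℝ) (hN : 0 ≤ N)
    (V : Matrix (Fin n × Fin 2) (Fin n × Fin 2) ℝ) (hpd : V.PosDef)
    (henergy : ∀ k : Fin n, V (k, 0) (k, 0) + V (k, 1) (k, 1) ≤ 2*(N + 1/2)) :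
    1 ≤ (N + 1/2)^(n/2) *
      (((Finset.univ.powersetCard (n/2) : Finset (Finset (Fin n))).card : ℝ)⁻¹ *
        ∑ A ∈ Finset.univ.powersetCard (n/2), (Real.sqrt (subdet n V A))⁻¹) :=
  chi_ge_one_general n N hN V hpd henergy
end
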